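/- arXiv:math/0412122 — 2 statements merged into one kernel-verified Lean document; each statement's English description precedes it below -/
import Mathlib

section
/- Every morphism of right A-comodules over a right bialgebroid A over T is automatically a T-T-bimodule map with respect to the induced left T-module structures on source and target. -/
open scoped TensorProduct
open Finset Function

noncomputable section

/-- The algebra part of a right bialgebroid over `T`: a `k`-algebra `A`, a
source map `s_r : T → A`, a target (anti)map `t_r : T → A` with commuting
images, and a counit `φ_T`. -/
structure RBgd (k T A : Type) [CommRing k] [Ring T] [Algebra k T]
    [Ring A] [Algebra k A] where
  sr : T →ₐ[k] A
  tr : T →ₗ[k] A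
  tr_one : tr 1 = 1
  tr_mul : ∀ s t, tr (s * t) = tr t * tr s
  comm : ∀ s t, sr s * tr t = tr t * sr s
  phiT : A →ₗ[k] T
  phiT_left : ∀ t a, phiT (tr t * a) = t * phiT a
  phiT_right : ∀ t a, phiT (a * sr t) = phiT a * t
  phiT_one : phiT 1 = 1

namespace RBgd

variable {k T A : Type} [CommRing k] [Ring T] [Algebra k T]
  [Ring A] [Algebra k A] (B : RBgd k T A)

/-- Relators of the coring tensor square `A ⊗_T A` :
`a s_r(t) ⊗ b - a ⊗ t_r(t) b`. -/
def relAA : Submodule k (A ⊗[k] A) :=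
  Submodule.span k
    { z | ∃ a b t, z = (a * B.sr t) ⊗ₜ[k] b - a ⊗ₜ[k] (B.tr t * b) }

/-- `A ⊗_T A`. -/
def AAq := (A ⊗[k] A) ⧸ B.relAA

instance : AddCommGroup B.AAq := inferInstanceAs (AddCommGroup ((A ⊗[k] A) ⧸ B.relAA))
instance : Module k B.AAq := inferInstanceAs (Module k ((A ⊗[k] A) ⧸ B.relAA))

def mkAA : (A ⊗[k] A) →ₗ[k] B.AAq := B.relAA.mkQ

/-- The comultiplication `Δ_T` together with the counit laws of the `T`-coring
`⟨A, Δ_T, φ_T⟩` (counit laws stated on representatives). -/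
structure IsCoring (Delta : A →ₗ[k] B.AAq) : Prop where
  counit_l : ∀ (a : A) (n : ℕ) (bs cs : Fin n → A),
    (Delta a = ∑ p, B.mkAA (bs p ⊗ₜ[k] cs p)) →
    (∑ p, B.tr (B.phiT (bs p)) * cs p) = a
  counit_r : ∀ (a : A) (n : ℕ) (bs cs : Fin n → A),
    (Delta a = ∑ p, B.mkAA (bs p ⊗ₜ[k] cs p)) →
    (∑ p, bs p * B.sr (B.phiT (cs p))) = a

variable {X : Type} [AddCommGroup X] [Module k X]

/-- Relators of `X ⊗_T A` for a right `T`-module `⟨X, ract⟩` :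
`x · t ⊗ a - x ⊗ t_r(t) a`. -/
def relX (ract : X →ₗ[k] T →ₗ[k] X) : Submodule k (X ⊗[k] A) :=
  Submodule.span k
    { z | ∃ x a t, z = ract x t ⊗ₜ[k] a - x ⊗ₜ[k] (B.tr t * a) }

/-- `X ⊗_T A`. -/
def XA (ract : X →ₗ[k] T →ₗ[k] X) := (X ⊗[k] A) ⧸ B.relX ract

instance (ract : X →ₗ[k] T →ₗ[k] X) : AddCommGroup (B.XA ract) :=
  inferInstanceAs (AddCommGroup ((X ⊗[k] A) ⧸ B.relX ract))
instance (ract : X →ₗ[k] T →ₗ[k] X) : Module k (B.XA ract) :=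
  inferInstanceAs (Module k ((X ⊗[k] A) ⧸ B.relX ract))

def mkX (ract : X →ₗ[k] T →ₗ[k] X) : (X ⊗[k] A) →ₗ[k] B.XA ract :=
  (B.relX ract).mkQ

/-- The right `T`-action on `X ⊗_T A` : `(x ⊗ a) · t = x ⊗ a s_r(t)`. -/
def rho (ract : X →ₗ[k] T →ₗ[k] X) (t : T) : B.XA ract →ₗ[k] B.XA ract :=
  Submodule.liftQ _
    ((B.mkX ract).comp (TensorProduct.map LinearMap.id (LinearMap.mulRight k (B.sr t))))
    (by
      unfold relX
      rw [Submodule.span_le]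
      rintro z ⟨x, a, s, rfl⟩
      simp only [SetLike.mem_coe, LinearMap.mem_ker, map_sub, LinearMap.coe_comp,
        Function.comp_apply, TensorProduct.map_tmul, LinearMap.mulRight_apply,
        LinearMap.id_apply]
      rw [← map_sub]
      show Submodule.Quotient.mk _ = 0
      rw [Submodule.Quotient.mk_eq_zero]
      exact Submodule.subset_span ⟨x, a * B.sr t, s, by rw [mul_assoc]⟩)

/-- The left `T`-action on `X ⊗_T A` : `t · (x ⊗ a) = x ⊗ s_r(t) a`. -/
def rhoL (ract : X →ₗ[k] T →ₗ[k] X) (t : T) : B.XA ract →ₗ[k] B.XA ract :=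
  Submodule.liftQ _
    ((B.mkX ract).comp (TensorProduct.map LinearMap.id (LinearMap.mulLeft k (B.sr t))))
    (by
      unfold relX
      rw [Submodule.span_le]
      rintro z ⟨x, a, s, rfl⟩
      simp only [SetLike.mem_coe, LinearMap.mem_ker, map_sub, LinearMap.coe_comp,
        Function.comp_apply, TensorProduct.map_tmul, LinearMap.mulLeft_apply,
        LinearMap.id_apply]
      rw [← map_sub]
      show Submodule.Quotient.mk _ = 0
      rw [Submodule.Quotient.mk_eq_zero]
      refine Submodule.subset_span ⟨x, B.sr t * a, s, ?_⟩
      rw [← mul_assoc, B.comm, mul_assoc])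

/-- The counit map `X ⊗_T φ_T : X ⊗_T A → X`, `x ⊗ a ↦ x · φ_T(a)`. -/
def cmap (ract : X →ₗ[k] T →ₗ[k] X)
    (hm : ∀ x s t, ract (ract x s) t = ract x (s * t)) :
    B.XA ract →ₗ[k] X :=
  Submodule.liftQ _ (TensorProduct.lift (ract.compl₂ B.phiT))
    (by
      unfold relX
      rw [Submodule.span_le]
      rintro z ⟨x, a, t, rfl⟩
      simp only [SetLike.mem_coe, LinearMap.mem_ker, map_sub,
        TensorProduct.lift.tmul, LinearMap.compl₂_apply]
      rw [hm, B.phiT_left, sub_self])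

/-- Relators of `(X ⊗_T A) ⊗_T A`. -/
def relW (ract : X →ₗ[k] T →ₗ[k] X) : Submodule k ((X ⊗[k] A) ⊗[k] A) :=
  Submodule.span k
    ({ z | ∃ x a c t, z = (ract x t ⊗ₜ[k] a) ⊗ₜ[k] c
        - (x ⊗ₜ[k] (B.tr t * a)) ⊗ₜ[k] c } ∪
     { z | ∃ x a c t, z = (x ⊗ₜ[k] (a * B.sr t)) ⊗ₜ[k] c
        - (x ⊗ₜ[k] a) ⊗ₜ[k] (B.tr t * c) })

/-- `(X ⊗_T A) ⊗_T A`. -/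
def XAA (ract : X →ₗ[k] T →ₗ[k] X) := ((X ⊗[k] A) ⊗[k] A) ⧸ B.relW ract

instance (ract : X →ₗ[k] T →ₗ[k] X) : AddCommGroup (B.XAA ract) :=
  inferInstanceAs (AddCommGroup (((X ⊗[k] A) ⊗[k] A) ⧸ B.relW ract))
instance (ract : X →ₗ[k] T →ₗ[k] X) : Module k (B.XAA ract) :=
  inferInstanceAs (Module k (((X ⊗[k] A) ⊗[k] A) ⧸ B.relW ract))

def mkW (ract : X →ₗ[k] T →ₗ[k] X) : ((X ⊗[k] A) ⊗[k] A) →ₗ[k] B.XAA ract :=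
  (B.relW ract).mkQ

/-- The axioms making `⟨X, ract, delta⟩` a right comodule over the right
bialgebroid `⟨B, Delta⟩`: `δ` is a right `T`-module map, counital and
coassociative (coassociativity is stated on representatives, as an equality in
`(X ⊗_T A) ⊗_T A`). -/
structure IsComodule (Delta : A →ₗ[k] B.AAq)
    (ract : X →ₗ[k] T →ₗ[k] X) (delta : X →ₗ[k] B.XA ract) : Prop where
  ract_one : ∀ x, ract x 1 = x
  ract_mul : ∀ x s t, ract (ract x s) t = ract x (s * t)
  delta_ract : ∀ t x, delta (ract x t) = B.rho ract t (delta x)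
  counital : ∀ x, B.cmap ract ract_mul (delta x) = x
  coassoc : ∀ (x : X) (n : ℕ) (xs : Fin n → X) (as : Fin n → A),
    (delta x = ∑ j, B.mkX ract (xs j ⊗ₜ[k] as j)) →
    ∀ (ns : Fin n → ℕ) (xss : ∀ j, Fin (ns j) → X) (ass : ∀ j, Fin (ns j) → A),
    (∀ j, delta (xs j) = ∑ l, B.mkX ract (xss j l ⊗ₜ[k] ass j l)) →
    ∀ (ms : Fin n → ℕ) (bs cs : ∀ j, Fin (ms j) → A),
    (∀ j, Delta (as j) = ∑ p, B.mkAA (bs j p ⊗ₜ[k] cs j p)) →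
    (∑ j, ∑ l, B.mkW ract ((xss j l ⊗ₜ[k] ass j l) ⊗ₜ[k] as j))
      = ∑ j, ∑ p, B.mkW ract ((xs j ⊗ₜ[k] bs j p) ⊗ₜ[k] cs j p)

end RBgd


private lemma exists_fin_rep {k M N : Type} [CommRing k] [AddCommGroup M] [Module k M]
    [AddCommGroup N] [Module k N] (z : M ⊗[k] N) :
    ∃ (n : ℕ) (ms : Fin n → M) (ns : Fin n → N), z = ∑ j, ms j ⊗ₜ[k] ns j := by
  obtain ⟨S, hS⟩ := TensorProduct.exists_finset z
  refine ⟨S.card, fun j => ((S.equivFin.symm j : S) : M × N).1,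
    fun j => ((S.equivFin.symm j : S) : M × N).2, ?_⟩
  rw [hS, ← Finset.sum_attach S (fun i => i.1 ⊗ₜ[k] i.2)]
  exact (Fintype.sum_equiv S.equivFin.symm _ _ (fun j => rfl)).symm

private lemma cmap_rhoL_mk {k T A : Type} [CommRing k] [Ring T] [Algebra k T]
    [Ring A] [Algebra k A] (B : RBgd k T A)
    {X : Type} [AddCommGroup X] [Module k X]
    (ract : X →ₗ[k] T →ₗ[k] X)
    (hm : ∀ x s t, ract (ract x s) t = ract x (s * t))
    (t : T) (x : X) (a : A) :
    B.cmap ract hm (B.rhoL ract t (B.mkX ract (x ⊗ₜ[k] a)))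
      = ract x (B.phiT (B.sr t * a)) := by
  rfl

/-- Every morphism of right `A`-comodules over a right
bialgebroid `A` over `T` (a right `T`-module map `τ` with
`(τ ⊗_T A) ∘ γ = δ ∘ τ`, the latter stated on representatives) is
automatically a `T`-`T`-bimodule map for the induced left `T`-actions
`t · x = x^(0) · φ_T(s_r(t) x^(1))` on source and target. -/
theorem stmt2 {k T A : Type} [CommRing k] [Ring T] [Algebra k T]
    [Ring A] [Algebra k A] (B : RBgd k T A)
    (Delta : A →ₗ[k] B.AAq) (hcor : B.IsCoring Delta)
    {X : Type} [AddCommGroup X] [Module k X]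
    (ractX : X →ₗ[k] T →ₗ[k] X) (deltaX : X →ₗ[k] B.XA ractX)
    (hX : B.IsComodule Delta ractX deltaX)
    {Y : Type} [AddCommGroup Y] [Module k Y]
    (ractY : Y →ₗ[k] T →ₗ[k] Y) (deltaY : Y →ₗ[k] B.XA ractY)
    (hY : B.IsComodule Delta ractY deltaY)
    (τ : X →ₗ[k] Y)
    -- τ is right `T`-linear
    (hτT : ∀ x t, τ (ractX x t) = ractY (τ x) t)
    -- τ is a comodule morphism: `(τ ⊗_T A) ∘ δ_X = δ_Y ∘ τ`
    (hτC : ∀ (x : X) (n : ℕ) (xs : Fin n → X) (as : Fin n → A),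
      (deltaX x = ∑ j, B.mkX ractX (xs j ⊗ₜ[k] as j)) →
      deltaY (τ x) = ∑ j, B.mkX ractY (τ (xs j) ⊗ₜ[k] as j)) :
    -- then τ is left `T`-linear for the induced left `T`-actions
    ∀ t x, τ (B.cmap ractX hX.ract_mul (B.rhoL ractX t (deltaX x)))
      = B.cmap ractY hY.ract_mul (B.rhoL ractY t (deltaY (τ x))) := by
  intro t x
  obtain ⟨z, hz⟩ := (B.relX ractX).mkQ_surjective (deltaX x)
  obtain ⟨n, xs, as, rfl⟩ := exists_fin_rep z
  have hrep : deltaX x = ∑ j, B.mkX ractX (xs j ⊗ₜ[k] as j) := by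
    rw [← hz, map_sum]; rfl
  have hrepY := hτC x n xs as hrep
  rw [hrep, hrepY, map_sum, map_sum, map_sum, map_sum, map_sum]
  simp only [cmap_rhoL_mk]
  exact Finset.sum_congr rfl fun j _ => hτT _ _
end
end

section
/- For a Frobenius Hopf algebroid H (the horizontal Hopf algebroid of a distributive double algebra), the full subcategory of finitely generated projective right H-modules is closed under the monoidal product of M_H; in particular H ⊗_R H is finitely generated projective as a right H-module, via the right H-module isomorphism Γ_RB : H ⊗_R H → A ⊗_B H, a ⊗ a' ↦ a_(1) ⊗_B a_(2) ∘ a', where A_B is finitely generated projective. -/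
/-!
`Γ_RB` has the explicit inverse `a ⊗_B h ↦ ∑ (a ⋆ xR_m) ⊗_R (yR_m ∘ h)`, and it carries the
diagonal action on `H ⊗_R H` to the action of `H` on the second factor of `A ⊗_B H`. The
identities behind both facts are Casimir properties of `∑ u_j ⊗ v_j` and `∑ xR_m ⊗ yR_m`,
obtained from the distributive laws and the Frobenius conditions. Since `A_B` is finitely
generated projective with dual basis `u_j`, `φ_B (v_j ⋆ -)`, the module `A ⊗_B H`, and hence
`H ⊗_R H`, is a direct summand of `H^{n_B}`. For fgp `Y` and `Y'`, the coordinate maps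
`Y ⇄ H` of their direct-sum decompositions induce maps on `⊗_R` exhibiting `Y ⊗_R Y'` as a
retract of a finite direct sum of copies of `H ⊗_R H`.
-/

open scoped TensorProduct
open Finset Function

noncomputable section

/-- A (Frobenius, distributive) double algebra with antipode, over a commutative
ring `k`: one `k`-module `A` with a vertical multiplication `vmul` (`∘`, unit `e`)
and a horizontal multiplication `hmul` (`⋆`, unit `i`), the four Frobenius
dual-basis systems for the base maps `φ_B, φ_T, φ_L, φ_R`, the four
distributivity laws, and an antipode `S`. -/
structure DDA (k A : Type) [CommRing k] [AddCommGroup A] [Module k A] : Type where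
  vmul : A →ₗ[k] A →ₗ[k] A
  hmul : A →ₗ[k] A →ₗ[k] A
  e : A
  i : A
  vassoc : ∀ a b c, vmul (vmul a b) c = vmul a (vmul b c)
  e_vmul : ∀ a, vmul e a = a
  vmul_e : ∀ a, vmul a e = a
  hassoc : ∀ a b c, hmul (hmul a b) c = hmul a (hmul b c)
  i_hmul : ∀ a, hmul i a = a
  hmul_i : ∀ a, hmul a i = a
  nB : ℕ
  uB : Fin nB → A
  vB : Fin nB → A
  nT : ℕ
  uT : Fin nT → A
  vT : Fin nT → A
  nL : ℕ
  xL : Fin nL → A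
  yL : Fin nL → A
  nR : ℕ
  xR : Fin nR → A
  yR : Fin nR → A
  frobB1 : ∀ a, ∑ j, hmul (vmul (hmul a (uB j)) i) (vB j) = a
  frobB2 : ∀ a, ∑ j, hmul (hmul a (uB j)) (vmul (vB j) i) = a
  frobT1 : ∀ a, ∑ j, hmul (vmul i (hmul a (uT j))) (vT j) = a
  frobT2 : ∀ a, ∑ j, hmul (hmul a (uT j)) (vmul i (vT j)) = a
  frobL1 : ∀ a, ∑ j, vmul (hmul (vmul a (xL j)) e) (yL j) = a
  frobL2 : ∀ a, ∑ j, vmul (vmul a (xL j)) (hmul (yL j) e) = a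
  frobR1 : ∀ a, ∑ j, vmul (hmul e (vmul a (xR j))) (yR j) = a
  frobR2 : ∀ a, ∑ j, vmul (vmul a (xR j)) (hmul e (yR j)) = a
  distB : ∀ a a' a'', vmul a (hmul a' a'') = ∑ j, hmul (vmul (hmul a (uB j)) a') (vmul (vB j) a'')
  distL : ∀ a a' a'', hmul a (vmul a' a'') = ∑ j, vmul (hmul (vmul a (xL j)) a') (hmul (yL j) a'')
  distT : ∀ a a' a'', vmul (hmul a' a'') a = ∑ j, hmul (vmul a' (hmul a (uT j))) (vmul a'' (vT j))
  distR : ∀ a a' a'', hmul (vmul a' a'') a = ∑ j, vmul (hmul a' (vmul a (xR j))) (hmul a'' (yR j))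
  S : A ≃ₗ[k] A
  S_vmul : ∀ a b, S (vmul a b) = vmul (S b) (S a)
  S_hmul : ∀ a b, S (hmul a b) = hmul (S b) (S a)

namespace DDA

variable {k A : Type} [CommRing k] [AddCommGroup A] [Module k A] (D : DDA k A)

/-- `φ_B(a) = a ∘ i`. -/
def phiB (a : A) : A := D.vmul a D.i
/-- `φ_T(a) = i ∘ a`. -/
def phiT (a : A) : A := D.vmul D.i a
/-- `φ_L(a) = a ⋆ e`. -/
def phiL (a : A) : A := D.hmul a D.e
/-- `φ_R(a) = e ⋆ a`. -/
def phiR (a : A) : A := D.hmul D.e a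

def Bset : Set A := Set.range D.phiB
def Tset : Set A := Set.range D.phiT
def Lset : Set A := Set.range D.phiL
def Rset : Set A := Set.range D.phiR

end DDA

set_option maxHeartbeats 1000000

/-- A right module over the horizontal algebra `H = ⟨A,⋆,i⟩` of a double
algebra. -/
structure RightHMod (k A : Type) [CommRing k] [AddCommGroup A] [Module k A]
    (D : DDA k A) where
  X : Type
  [instAdd : AddCommGroup X]
  [instMod : Module k X]
  act : X →ₗ[k] A →ₗ[k] X
  act_act : ∀ x a b, act (act x a) b = act x (D.hmul a b)
  act_i : ∀ x, act x D.i = x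

attribute [instance] RightHMod.instAdd RightHMod.instMod

namespace RightHMod

variable {k A : Type} [CommRing k] [AddCommGroup A] [Module k A] {D : DDA k A}

/-- A right `H`-module is finitely generated projective iff it is a direct
summand of a finite direct sum of copies of the regular module `H`. -/
def Fgp (Y : RightHMod k A D) : Prop :=
  ∃ (n : ℕ) (u : Y.X →ₗ[k] (Fin n → A)) (p : (Fin n → A) →ₗ[k] Y.X),
    (∀ x h j, u (Y.act x h) j = D.hmul (u x j) h) ∧
    (∀ v h, p (fun j => D.hmul (v j) h) = Y.act (p v) h) ∧
    ∀ x, p (u x) = x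

/-- Relators for the monoidal product `X ⊗_R Y` of two right `H`-modules
(`x · r ⊗ y = x ⊗ r · y`, with `x · r = x ◁ φ_T(r)`, `r · y = y ◁ φ_B(r)`,
`r = φ_R(c)`). -/
def relXY (Y Y' : RightHMod k A D) : Submodule k (Y.X ⊗[k] Y'.X) :=
  Submodule.span k
    { z | ∃ x y c, z = Y.act x (D.phiT (D.phiR c)) ⊗ₜ[k] y
        - x ⊗ₜ[k] Y'.act y (D.phiB (D.phiR c)) }

def TensorR (Y Y' : RightHMod k A D) := (Y.X ⊗[k] Y'.X) ⧸ relXY Y Y'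

instance (Y Y' : RightHMod k A D) : AddCommGroup (TensorR Y Y') :=
  inferInstanceAs (AddCommGroup ((Y.X ⊗[k] Y'.X) ⧸ relXY Y Y'))
instance (Y Y' : RightHMod k A D) : Module k (TensorR Y Y') :=
  inferInstanceAs (Module k ((Y.X ⊗[k] Y'.X) ⧸ relXY Y Y'))

def mkXY (Y Y' : RightHMod k A D) : (Y.X ⊗[k] Y'.X) →ₗ[k] TensorR Y Y' :=
  (relXY Y Y').mkQ

/-- The diagonal right `H`-action on `X ⊗_R Y`
(`(x ⊗ y) ◁ h = (x ◁ h^[1]) ⊗ (y ◁ h^[2])` with `Δ_R h = Σ (h ∘ x^j) ⊗ y^j`). -/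
def IsDiagAct (Y Y' : RightHMod k A D)
    (act2 : TensorR Y Y' →ₗ[k] A →ₗ[k] TensorR Y Y') : Prop :=
  ∀ x y h, act2 (mkXY Y Y' (x ⊗ₜ[k] y)) h
    = ∑ j, mkXY Y Y' (Y.act x (D.vmul h (D.xR j)) ⊗ₜ[k] Y'.act y (D.yR j))

/-- Finitely generated projectivity of a tensor square relative to a given
diagonal action. -/
def FgpOn (Y Y' : RightHMod k A D) (act2 : TensorR Y Y' →ₗ[k] A →ₗ[k] TensorR Y Y') :
    Prop :=
  ∃ (n : ℕ) (u : TensorR Y Y' →ₗ[k] (Fin n → A))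
    (p : (Fin n → A) →ₗ[k] TensorR Y Y'),
    (∀ z h j, u (act2 z h) j = D.hmul (u z j) h) ∧
    (∀ v h, p (fun j => D.hmul (v j) h) = act2 (p v) h) ∧
    ∀ z, p (u z) = z

end RightHMod

section Stmt18

variable {k A : Type} [CommRing k] [AddCommGroup A] [Module k A] (D : DDA k A)

/-- The regular right `H`-module. -/
def regH : RightHMod k A D where
  X := A
  act := D.hmul
  act_act := D.hassoc
  act_i := D.hmul_i

/-- Relators for `A ⊗_B H` (`a · b ⊗ h = a ⊗ b ⋆ h`, `b ∈ B`). -/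
def relAB : Submodule k (A ⊗[k] A) :=
  Submodule.span k
    { z | ∃ a h c, z = D.hmul a (D.phiB c) ⊗ₜ[k] h - a ⊗ₜ[k] D.hmul (D.phiB c) h }

def AtB := (A ⊗[k] A) ⧸ relAB D

instance : AddCommGroup (AtB D) := inferInstanceAs (AddCommGroup ((A ⊗[k] A) ⧸ relAB D))
instance : Module k (AtB D) := inferInstanceAs (Module k ((A ⊗[k] A) ⧸ relAB D))

def mkAB : (A ⊗[k] A) →ₗ[k] AtB D := (relAB D).mkQ

namespace DDA

theorem vmul_eq_sum_phiB_hmul (a b : A) :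
    D.vmul a b = ∑ j, D.hmul (D.vmul (D.hmul a (D.uB j)) D.i) (D.vmul (D.vB j) b) := by
  simpa only [D.i_hmul] using D.distB a D.i b

theorem hmul_eq_sum_phiL_vmul (a b : A) :
    D.hmul a b = ∑ l, D.vmul (D.hmul (D.vmul a (D.xL l)) D.e) (D.hmul (D.yL l) b) := by
  simpa only [D.e_vmul] using D.distL a D.e b

theorem phiB_apply_hmul (y z : A) :
    D.vmul (D.hmul y z) D.i = ∑ m, D.hmul (D.vmul y (D.uT m)) (D.vmul z (D.vT m)) := by
  simpa only [D.i_hmul] using D.distT D.i y z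

theorem phiR_apply_vmul (y z : A) :
    D.hmul D.e (D.vmul y z) = ∑ l, D.vmul (D.hmul (D.xL l) y) (D.hmul (D.yL l) z) := by
  simpa only [D.e_vmul] using D.distL D.e y z

theorem phiL_apply_vmul (y z : A) :
    D.hmul (D.vmul y z) D.e = ∑ m, D.vmul (D.hmul y (D.xR m)) (D.hmul z (D.yR m)) := by
  simpa only [D.e_vmul] using D.distR D.e y z

theorem vmul_phiR_eq_sum (x d : A) :
    D.vmul x (D.hmul D.e d) = ∑ j, D.hmul (D.hmul x (D.uB j)) (D.vmul (D.vB j) d) := by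
  simpa only [D.vmul_e] using D.distB x D.e d

theorem phiR_vmul_eq_sum (a d : A) :
    D.vmul (D.hmul D.e d) a = ∑ m, D.hmul (D.hmul a (D.uT m)) (D.vmul d (D.vT m)) := by
  simpa only [D.e_vmul] using D.distT a D.e d

theorem phiB_hmul_eq_sum (c x : A) :
    D.hmul (D.vmul c D.i) x = ∑ m, D.vmul (D.hmul c (D.vmul x (D.xR m))) (D.yR m) := by
  simpa only [D.i_hmul] using D.distR x c D.i

theorem phiT_hmul_eq_sum (t x : A) :
    D.hmul (D.vmul D.i t) x = ∑ m, D.vmul (D.vmul x (D.xR m)) (D.hmul t (D.yR m)) := by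
  simpa only [D.i_hmul] using D.distR x D.i t

theorem sum_uB_hmul_vB_vmul (z : A) :
    ∑ j, D.hmul (D.uB j) (D.vmul (D.vB j) z) = D.vmul D.i (D.hmul D.e z) := by
  simpa only [D.i_hmul, D.vmul_e] using (D.distB D.i D.e z).symm

theorem sum_xR_vmul_hmul_yR (z : A) :
    ∑ m, D.vmul (D.xR m) (D.hmul z (D.yR m)) = D.hmul (D.vmul D.i z) D.e := by
  simpa only [D.i_hmul] using (D.phiL_apply_vmul D.i z).symm

theorem sum_phiR_xR_vmul_yR : ∑ m, D.vmul (D.hmul D.e (D.xR m)) (D.yR m) = D.e := by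
  simpa only [D.e_vmul] using D.frobR1 D.e

/-- `A` is finitely generated projective as a right `B`-module, with dual basis
`u_j`, `φ_B (v_j ⋆ -)`. -/
theorem sum_uB_hmul_phiB_vB_hmul (a : A) :
    ∑ j, D.hmul (D.uB j) (D.vmul (D.hmul (D.vB j) a) D.i) = a := by
  have h_unit : ∀ a : A,
      ∑ m, D.hmul (D.vmul D.i (D.hmul D.e (D.uT m))) (D.vmul a (D.vT m)) = a := fun a => by
    simpa only [D.i_hmul, D.vmul_e] using (D.distT D.e D.i a).symm
  calc ∑ j, D.hmul (D.uB j) (D.vmul (D.hmul (D.vB j) a) D.i)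
      = ∑ m, ∑ j, D.hmul (D.hmul (D.uB j) (D.vmul (D.vB j) (D.uT m))) (D.vmul a (D.vT m)) := by
        rw [Finset.sum_comm]
        simp only [phiB_apply_hmul, map_sum, D.hassoc]
    _ = a := by
        simp only [← LinearMap.map_sum₂, sum_uB_hmul_vB_vmul, h_unit]

theorem sum_xR_vmul_phiR_yR_vmul (a : A) :
    ∑ m, D.vmul (D.xR m) (D.hmul D.e (D.vmul (D.yR m) a)) = a := by
  have h_unit : ∀ a : A,
      ∑ l, D.vmul (D.hmul (D.vmul D.i (D.xL l)) D.e) (D.hmul (D.yL l) a) = a := fun a => by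
    simpa only [D.i_hmul] using (D.hmul_eq_sum_phiL_vmul D.i a).symm
  calc ∑ m, D.vmul (D.xR m) (D.hmul D.e (D.vmul (D.yR m) a))
      = ∑ l, ∑ m, D.vmul (D.vmul (D.xR m) (D.hmul (D.xL l) (D.yR m))) (D.hmul (D.yL l) a) := by
        rw [Finset.sum_comm]
        simp only [phiR_apply_vmul, map_sum, D.vassoc]
    _ = a := by
        simp only [← LinearMap.map_sum₂, sum_xR_vmul_hmul_yR, h_unit]

theorem hmul_vmul_phiR (x w d : A) :
    D.vmul (D.hmul x w) (D.hmul D.e d) = D.hmul x (D.vmul w (D.hmul D.e d)) := by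
  simp only [vmul_phiR_eq_sum, map_sum, D.hassoc]

theorem hmul_phiT_phiR (x d : A) :
    D.hmul x (D.vmul D.i (D.hmul D.e d)) = D.vmul x (D.hmul D.e d) := by
  rw [← sum_uB_hmul_vB_vmul, map_sum, vmul_phiR_eq_sum]
  simp only [D.hassoc]

theorem hmul_phiB_phiR (q d : A) :
    D.hmul q (D.vmul (D.hmul D.e d) D.i) = D.vmul (D.hmul D.e d) q := by
  have h_phiB : D.vmul (D.hmul D.e d) D.i = ∑ m, D.hmul (D.uT m) (D.vmul d (D.vT m)) := by
    simpa only [D.i_hmul] using D.phiR_vmul_eq_sum D.i d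
  simp only [h_phiB, phiR_vmul_eq_sum, map_sum, D.hassoc]

/-- The `R`-Casimir property of `∑ xR_m ⊗ yR_m`: a factor `h` can be moved from the
second leg to the first. -/
theorem sum_hmul_vmul_xR_vmul_yR_vmul (z g h : A) :
    ∑ m, D.vmul (D.hmul z (D.vmul g (D.xR m))) (D.vmul (D.yR m) h)
      = ∑ m, D.vmul (D.hmul z (D.vmul (D.vmul g h) (D.xR m))) (D.yR m) := by
  have h_expand : ∀ m, D.vmul (D.yR m) h
      = ∑ l, D.vmul (D.hmul D.e (D.vmul (D.yR m) (D.vmul h (D.xR l)))) (D.yR l) := fun m => by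
    simpa only [D.vassoc] using (D.frobR1 (D.vmul (D.yR m) h)).symm
  calc ∑ m, D.vmul (D.hmul z (D.vmul g (D.xR m))) (D.vmul (D.yR m) h)
      = ∑ l, ∑ m, D.vmul (D.hmul z (D.vmul g (D.vmul (D.xR m)
          (D.hmul D.e (D.vmul (D.yR m) (D.vmul h (D.xR l))))))) (D.yR l) := by
        rw [Finset.sum_comm]
        simp only [h_expand, map_sum]
        refine Finset.sum_congr rfl fun m _ => Finset.sum_congr rfl fun l _ => ?_
        rw [← D.vassoc, hmul_vmul_phiR, D.vassoc]
    _ = ∑ m, D.vmul (D.hmul z (D.vmul (D.vmul g h) (D.xR m))) (D.yR m) := by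
        simp only [← LinearMap.map_sum₂, ← map_sum, sum_xR_vmul_phiR_yR_vmul, D.vassoc]

theorem sum_hmul_xR_vmul_yR_vmul (z h : A) :
    ∑ m, D.vmul (D.hmul z (D.xR m)) (D.vmul (D.yR m) h) = D.hmul (D.vmul z D.i) h := by
  simpa only [D.e_vmul, ← phiB_hmul_eq_sum] using D.sum_hmul_vmul_xR_vmul_yR_vmul z D.e h

theorem phiB_hmul_vmul (c h w : A) :
    D.hmul (D.vmul c D.i) (D.vmul h w) = D.vmul (D.hmul (D.vmul c D.i) h) w := by
  have h_casimir := D.sum_hmul_vmul_xR_vmul_yR_vmul c h w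
  simp only [D.vassoc] at h_casimir
  simp only [phiB_hmul_eq_sum, LinearMap.map_sum₂, D.vassoc, h_casimir]

theorem vmul_phiT_hmul (w t x : A) :
    D.vmul w (D.hmul (D.vmul D.i t) x) = D.hmul (D.vmul D.i t) (D.vmul w x) := by
  simp only [phiT_hmul_eq_sum, map_sum, D.vassoc]

theorem S_i : D.S D.i = D.i := by
  simpa only [D.i_hmul, D.S.apply_symm_apply] using (D.S_hmul D.i (D.S.symm D.i)).symm

/-- Mirror image of `vmul_phiT_hmul` under the antipode. -/
theorem hmul_phiB_vmul (x c w : A) :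
    D.vmul (D.hmul x (D.vmul c D.i)) w = D.hmul (D.vmul x w) (D.vmul c D.i) := by
  apply D.S.injective
  rw [D.S_vmul, D.S_hmul, D.S_vmul, D.S_hmul, D.S_vmul, D.S_vmul, S_i]
  exact D.vmul_phiT_hmul (D.S w) (D.S c) (D.S x)

end DDA

namespace RightHMod

variable {D}

theorem mkXY_act_phiT_tmul (Y Y' : RightHMod k A D) (x : Y.X) (y : Y'.X) (c : A) :
    mkXY Y Y' (Y.act x (D.phiT (D.phiR c)) ⊗ₜ[k] y)
      = mkXY Y Y' (x ⊗ₜ[k] Y'.act y (D.phiB (D.phiR c))) :=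
  (Submodule.Quotient.eq _).2 (Submodule.subset_span ⟨x, y, c, rfl⟩)

@[elab_as_elim]
theorem TensorR.induction_on {Y Y' : RightHMod k A D} {P : TensorR Y Y' → Prop}
    (z : TensorR Y Y') (zero : P 0) (tmul : ∀ x y, P (mkXY Y Y' (x ⊗ₜ[k] y)))
    (add : ∀ z w, P z → P w → P (z + w)) : P z := by
  obtain ⟨t, rfl⟩ : ∃ t, mkXY Y Y' t = z := Submodule.mkQ_surjective _ z
  induction t using TensorProduct.induction_on with
  | zero => simpa only [map_zero] using zero
  | tmul x y => exact tmul x y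
  | add s t hs ht => simpa only [map_add] using add _ _ hs ht

def TensorR.map {Y Y' Z Z' : RightHMod k A D} (f : Y.X →ₗ[k] Z.X) (g : Y'.X →ₗ[k] Z'.X)
    (hf : ∀ x h, f (Y.act x h) = Z.act (f x) h) (hg : ∀ y h, g (Y'.act y h) = Z'.act (g y) h) :
    TensorR Y Y' →ₗ[k] TensorR Z Z' :=
  (relXY Y Y').liftQ (mkXY Z Z' ∘ₗ TensorProduct.map f g) <| by
    rw [relXY, Submodule.span_le]
    rintro _ ⟨x, y, c, rfl⟩
    simp only [SetLike.mem_coe, LinearMap.mem_ker, map_sub, LinearMap.comp_apply,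
      TensorProduct.map_tmul, hf, hg, mkXY_act_phiT_tmul, sub_self]

section map

variable {Y Y' Z Z' : RightHMod k A D} {f : Y.X →ₗ[k] Z.X} {g : Y'.X →ₗ[k] Z'.X}
  {hf : ∀ x h, f (Y.act x h) = Z.act (f x) h} {hg : ∀ y h, g (Y'.act y h) = Z'.act (g y) h}

@[simp]
theorem TensorR.map_mkXY (x : Y.X) (y : Y'.X) :
    TensorR.map f g hf hg (mkXY Y Y' (x ⊗ₜ[k] y)) = mkXY Z Z' (f x ⊗ₜ[k] g y) :=
  rfl

theorem TensorR.map_act {act : TensorR Y Y' →ₗ[k] A →ₗ[k] TensorR Y Y'}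
    {act' : TensorR Z Z' →ₗ[k] A →ₗ[k] TensorR Z Z'}
    (hact : IsDiagAct Y Y' act) (hact' : IsDiagAct Z Z' act') (z : TensorR Y Y') (h : A) :
    TensorR.map f g hf hg (act z h) = act' (TensorR.map f g hf hg z) h := by
  induction z using TensorR.induction_on with
  | zero => simp only [map_zero, LinearMap.zero_apply]
  | tmul x y =>
    rw [hact x y h, map_mkXY, hact' (f x) (g y) h, map_sum]
    simp only [map_mkXY, hf, hg]
  | add z w hz hw => simp only [map_add, LinearMap.add_apply, hz, hw]

end map

end RightHMod

open RightHMod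

theorem mkAB_hmul_phiB_tmul (a h c : A) :
    mkAB D (D.hmul a (D.vmul c D.i) ⊗ₜ[k] h) = mkAB D (a ⊗ₜ[k] D.hmul (D.vmul c D.i) h) :=
  (Submodule.Quotient.eq _).2 (Submodule.subset_span ⟨a, h, c, rfl⟩)

@[elab_as_elim]
theorem AtB.induction_on {P : AtB D → Prop} (ξ : AtB D) (zero : P 0)
    (tmul : ∀ a h, P (mkAB D (a ⊗ₜ[k] h))) (add : ∀ ξ ζ, P ξ → P ζ → P (ξ + ζ)) : P ξ := by
  obtain ⟨t, rfl⟩ : ∃ t, mkAB D t = ξ := Submodule.mkQ_surjective _ ξ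
  induction t using TensorProduct.induction_on with
  | zero => simpa only [map_zero] using zero
  | tmul a h => exact tmul a h
  | add s t hs ht => simpa only [map_add] using add _ _ hs ht

/-- The right `H`-action on `A ⊗_B H`, through the second factor. -/
def actAB (h : A) : AtB D →ₗ[k] AtB D :=
  (relAB D).liftQ (mkAB D ∘ₗ TensorProduct.map LinearMap.id (D.hmul.flip h)) <| by
    rw [relAB, Submodule.span_le]
    rintro _ ⟨a, b, c, rfl⟩
    simp only [SetLike.mem_coe, LinearMap.mem_ker, map_sub, LinearMap.comp_apply,
      TensorProduct.map_tmul, LinearMap.id_apply, LinearMap.flip_apply, DDA.phiB, D.hassoc,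
      mkAB_hmul_phiB_tmul, sub_self]

@[simp]
theorem actAB_mkAB (h a b : A) : actAB D h (mkAB D (a ⊗ₜ[k] b)) = mkAB D (a ⊗ₜ[k] D.hmul b h) :=
  rfl

/-- The coordinates of `A ⊗_B H` over the dual basis of `A_B`. -/
def coordAB (j : Fin D.nB) : AtB D →ₗ[k] A :=
  (relAB D).liftQ (TensorProduct.lift (D.hmul ∘ₗ D.vmul.flip D.i ∘ₗ D.hmul (D.vB j))) <| by
    rw [relAB, Submodule.span_le]
    rintro _ ⟨a, b, c, rfl⟩
    simp only [SetLike.mem_coe, LinearMap.mem_ker, map_sub, TensorProduct.lift.tmul,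
      LinearMap.comp_apply, LinearMap.flip_apply, DDA.phiB]
    rw [← D.hassoc, D.hmul_phiB_vmul, D.hassoc, sub_self]

@[simp]
theorem coordAB_mkAB (j : Fin D.nB) (a b : A) :
    coordAB D j (mkAB D (a ⊗ₜ[k] b)) = D.hmul (D.vmul (D.hmul (D.vB j) a) D.i) b :=
  rfl

theorem sum_mkAB_uB_tmul_coordAB (ξ : AtB D) : ∑ j, mkAB D (D.uB j ⊗ₜ[k] coordAB D j ξ) = ξ := by
  induction ξ using AtB.induction_on with
  | zero => simp only [map_zero, TensorProduct.tmul_zero, Finset.sum_const_zero]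
  | tmul a h =>
    simp only [coordAB_mkAB, ← mkAB_hmul_phiB_tmul, ← map_sum, ← TensorProduct.sum_tmul,
      D.sum_uB_hmul_phiB_vB_hmul]
  | add ξ ζ hξ hζ => simp only [map_add, TensorProduct.tmul_add, Finset.sum_add_distrib, hξ, hζ]

theorem sum_mkAB_hmul_uB_tmul_vmul (x y : A) :
    ∑ j, mkAB D (D.hmul x (D.uB j) ⊗ₜ[k] D.vmul (D.vB j) y)
      = ∑ l, mkAB D (D.uB l ⊗ₜ[k] D.vmul (D.hmul (D.vB l) x) y) := by
  calc ∑ j, mkAB D (D.hmul x (D.uB j) ⊗ₜ[k] D.vmul (D.vB j) y)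
      = ∑ j, ∑ l, mkAB D (D.hmul (D.uB l) (D.vmul (D.hmul (D.vB l) (D.hmul x (D.uB j))) D.i)
          ⊗ₜ[k] D.vmul (D.vB j) y) := by
        simp only [← map_sum, ← TensorProduct.sum_tmul, D.sum_uB_hmul_phiB_vB_hmul]
    _ = ∑ l, ∑ j, mkAB D (D.uB l ⊗ₜ[k]
          D.hmul (D.vmul (D.hmul (D.hmul (D.vB l) x) (D.uB j)) D.i) (D.vmul (D.vB j) y)) := by
        rw [Finset.sum_comm]
        simp only [mkAB_hmul_phiB_tmul, D.hassoc]
    _ = ∑ l, mkAB D (D.uB l ⊗ₜ[k] D.vmul (D.hmul (D.vB l) x) y) := by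
        simp only [← map_sum, ← TensorProduct.tmul_sum, ← D.vmul_eq_sum_phiB_hmul]

/-- The Casimir property of `∑ u_j ⊗ v_j` in `A ⊗_B H`. -/
theorem sum_mkAB_hmul_hmul_uB_tmul_vmul (a c w : A) :
    ∑ j, mkAB D (D.hmul a (D.hmul c (D.uB j)) ⊗ₜ[k] D.vmul (D.vB j) w)
      = ∑ j, mkAB D (D.hmul a (D.uB j) ⊗ₜ[k] D.vmul (D.hmul (D.vB j) c) w) := by
  symm
  calc ∑ j, mkAB D (D.hmul a (D.uB j) ⊗ₜ[k] D.vmul (D.hmul (D.vB j) c) w)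
      = ∑ j, ∑ l, mkAB D (D.hmul a (D.uB j) ⊗ₜ[k]
          D.hmul (D.vmul (D.hmul (D.vB j) (D.hmul c (D.uB l))) D.i) (D.vmul (D.vB l) w)) := by
        simp only [← map_sum, ← TensorProduct.tmul_sum, ← D.hassoc,
          ← D.vmul_eq_sum_phiB_hmul]
    _ = ∑ l, ∑ j, mkAB D (D.hmul a (D.hmul (D.uB j)
          (D.vmul (D.hmul (D.vB j) (D.hmul c (D.uB l))) D.i)) ⊗ₜ[k] D.vmul (D.vB l) w) := by
        rw [Finset.sum_comm]
        simp only [← mkAB_hmul_phiB_tmul, D.hassoc]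
    _ = ∑ l, mkAB D (D.hmul a (D.hmul c (D.uB l)) ⊗ₜ[k] D.vmul (D.vB l) w) := by
        simp only [← map_sum, ← TensorProduct.sum_tmul, D.sum_uB_hmul_phiB_vB_hmul]

/-- The quotient map onto `H ⊗_R H`, typed on `A ⊗ A` rather than on `(regH D).X ⊗ (regH D).X`
so that the tensor-product lemmas for `A` apply to its arguments. -/
def mkHH : A ⊗[k] A →ₗ[k] TensorR (regH D) (regH D) := mkXY (regH D) (regH D)

@[elab_as_elim]
theorem mkHH_induction_on {P : TensorR (regH D) (regH D) → Prop} (z : TensorR (regH D) (regH D))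
    (zero : P 0) (tmul : ∀ a a' : A, P (mkHH D (a ⊗ₜ[k] a')))
    (add : ∀ z w, P z → P w → P (z + w)) : P z :=
  TensorR.induction_on z zero tmul add

theorem mkHH_vmul_phiR_tmul (p q c : A) :
    mkHH D (D.vmul p (D.hmul D.e c) ⊗ₜ[k] q)
      = mkHH D (p ⊗ₜ[k] D.vmul (D.hmul D.e c) q) := by
  rw [← D.hmul_phiT_phiR p c, ← D.hmul_phiB_phiR q c]
  exact mkXY_act_phiT_tmul (regH D) (regH D) p q c

/-- The Casimir property of `∑ xR_m ⊗ yR_m` in `H ⊗_R H`. -/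
theorem sum_mkHH_hmul_xR_tmul_vmul (x v a : A) :
    ∑ m, mkHH D (D.hmul x (D.xR m) ⊗ₜ[k] D.vmul (D.yR m) (D.vmul v a))
      = ∑ l, mkHH D (D.hmul x (D.vmul v (D.xR l)) ⊗ₜ[k] D.vmul (D.yR l) a) := by
  have h_expand : ∀ m, D.vmul (D.yR m) (D.vmul v a)
      = ∑ l, D.vmul (D.hmul D.e (D.vmul (D.yR m) (D.vmul v (D.xR l)))) (D.vmul (D.yR l) a) :=
    fun m => by
      simpa only [LinearMap.map_sum₂, D.vassoc] using
        congrArg (fun t => D.vmul t a) (D.frobR1 (D.vmul (D.yR m) v)).symm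
  calc ∑ m, mkHH D (D.hmul x (D.xR m) ⊗ₜ[k] D.vmul (D.yR m) (D.vmul v a))
      = ∑ l, ∑ m, mkHH D
          (D.vmul (D.hmul x (D.xR m)) (D.hmul D.e (D.vmul (D.yR m) (D.vmul v (D.xR l))))
            ⊗ₜ[k] D.vmul (D.yR l) a) := by
        rw [Finset.sum_comm]
        simp only [h_expand, TensorProduct.tmul_sum, map_sum, mkHH_vmul_phiR_tmul]
    _ = ∑ l, mkHH D (D.hmul x (D.vmul v (D.xR l)) ⊗ₜ[k] D.vmul (D.yR l) a) := by
        simp only [D.hmul_vmul_phiR, ← map_sum, ← TensorProduct.sum_tmul,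
          D.sum_xR_vmul_phiR_yR_vmul]

/-- The inverse of `Γ_RB`, `a ⊗_B h ↦ ∑ (a ⋆ xR_m) ⊗_R (yR_m ∘ h)`. -/
def gammaInv : AtB D →ₗ[k] TensorR (regH D) (regH D) :=
  (relAB D).liftQ (∑ m, mkHH D ∘ₗ TensorProduct.map (D.hmul.flip (D.xR m)) (D.vmul (D.yR m))) <| by
    have h_casimir : ∀ x v : A, ∑ m, mkHH D (D.hmul x (D.xR m) ⊗ₜ[k] D.vmul (D.yR m) v)
        = ∑ m, mkHH D (D.hmul x (D.vmul v (D.xR m)) ⊗ₜ[k] D.yR m) := fun x v => by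
      simpa only [D.vmul_e] using sum_mkHH_hmul_xR_tmul_vmul D x v D.e
    rw [relAB, Submodule.span_le]
    rintro _ ⟨a, b, c, rfl⟩
    simp only [SetLike.mem_coe, LinearMap.mem_ker, map_sub, LinearMap.sum_apply,
      LinearMap.comp_apply, TensorProduct.map_tmul, LinearMap.flip_apply, DDA.phiB, h_casimir]
    simp only [D.hassoc, D.phiB_hmul_vmul, sub_self]

@[simp]
theorem gammaInv_mkAB (a b : A) :
    gammaInv D (mkAB D (a ⊗ₜ[k] b))
      = ∑ m, mkHH D (D.hmul a (D.xR m) ⊗ₜ[k] D.vmul (D.yR m) b) := by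
  change (∑ m, mkHH D ∘ₗ TensorProduct.map (D.hmul.flip (D.xR m)) (D.vmul (D.yR m)))
    (a ⊗ₜ[k] b) = _
  simp only [LinearMap.sum_apply, LinearMap.comp_apply, TensorProduct.map_tmul,
    LinearMap.flip_apply]

/-- `Γ` acts on generators as the map `Γ_RB`, `a ⊗_R a' ↦ a_(1) ⊗_B (a_(2) ∘ a')`. -/
abbrev IsGammaRB (Γ : TensorR (regH D) (regH D) →ₗ[k] AtB D) : Prop :=
  ∀ a a', Γ (mkHH D (a ⊗ₜ[k] a')) = ∑ j, mkAB D (D.hmul a (D.uB j) ⊗ₜ[k] D.vmul (D.vB j) a')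

section Gamma

variable {D} {act2 : TensorR (regH D) (regH D) →ₗ[k] A →ₗ[k] TensorR (regH D) (regH D)}
  {Γ : TensorR (regH D) (regH D) →ₗ[k] AtB D}

theorem RightHMod.IsDiagAct.apply_mkHH (hact2 : IsDiagAct (regH D) (regH D) act2) (a a' h : A) :
    act2 (mkHH D (a ⊗ₜ[k] a')) h
      = ∑ m, mkHH D (D.hmul a (D.vmul h (D.xR m)) ⊗ₜ[k] D.hmul a' (D.yR m)) :=
  hact2 a a' h

theorem IsGammaRB.apply_act_mkHH (hΓ : IsGammaRB D Γ) (hact2 : IsDiagAct (regH D) (regH D) act2)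
    (a a' h : A) :
    Γ (act2 (mkHH D (a ⊗ₜ[k] a')) h)
      = ∑ j, mkAB D (D.hmul a (D.uB j) ⊗ₜ[k] D.hmul (D.vmul (D.vB j) a') h) := by
  calc Γ (act2 (mkHH D (a ⊗ₜ[k] a')) h)
      = ∑ m, ∑ j, mkAB D (D.hmul a (D.hmul (D.vmul h (D.xR m)) (D.uB j))
          ⊗ₜ[k] D.vmul (D.vB j) (D.hmul a' (D.yR m))) := by
        simp only [hact2.apply_mkHH, map_sum, hΓ, D.hassoc]
    _ = ∑ j, ∑ m, mkAB D (D.hmul a (D.uB j)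
          ⊗ₜ[k] D.vmul (D.hmul (D.vB j) (D.vmul h (D.xR m))) (D.hmul a' (D.yR m))) := by
        simp only [sum_mkAB_hmul_hmul_uB_tmul_vmul]
        rw [Finset.sum_comm]
    _ = ∑ j, mkAB D (D.hmul a (D.uB j) ⊗ₜ[k] D.hmul (D.vmul (D.vB j) a') h) := by
        simp only [← map_sum, ← TensorProduct.tmul_sum, D.distR]

theorem IsGammaRB.apply_act (hΓ : IsGammaRB D Γ) (hact2 : IsDiagAct (regH D) (regH D) act2)
    (z : TensorR (regH D) (regH D)) (h : A) : Γ (act2 z h) = actAB D h (Γ z) := by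
  induction z using mkHH_induction_on with
  | zero => simp only [map_zero, LinearMap.zero_apply]
  | tmul a a' =>
    simp only [hΓ.apply_act_mkHH hact2, hΓ, map_sum, actAB_mkAB]
  | add z w hz hw => simp only [map_add, LinearMap.add_apply, hz, hw]

theorem IsGammaRB.apply_gammaInv (hΓ : IsGammaRB D Γ) (ξ : AtB D) : Γ (gammaInv D ξ) = ξ := by
  induction ξ using AtB.induction_on with
  | zero => simp only [map_zero]
  | tmul a h =>
    calc Γ (gammaInv D (mkAB D (a ⊗ₜ[k] h)))
        = ∑ m, ∑ l, mkAB D (D.uB l ⊗ₜ[k]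
            D.vmul (D.hmul (D.vB l) (D.hmul a (D.xR m))) (D.vmul (D.yR m) h)) := by
          simp only [gammaInv_mkAB, map_sum, hΓ, sum_mkAB_hmul_uB_tmul_vmul]
      _ = ∑ l, mkAB D (D.uB l ⊗ₜ[k] coordAB D l (mkAB D (a ⊗ₜ[k] h))) := by
          rw [Finset.sum_comm]
          simp only [← D.hassoc, ← map_sum, ← TensorProduct.tmul_sum, D.sum_hmul_xR_vmul_yR_vmul,
            coordAB_mkAB]
      _ = mkAB D (a ⊗ₜ[k] h) := sum_mkAB_uB_tmul_coordAB D _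
  | add ξ ζ hξ hζ => simp only [map_add, hξ, hζ]

theorem IsGammaRB.gammaInv_apply (hΓ : IsGammaRB D Γ) (z : TensorR (regH D) (regH D)) :
    gammaInv D (Γ z) = z := by
  induction z using mkHH_induction_on with
  | zero => simp only [map_zero]
  | tmul a a' =>
    calc gammaInv D (Γ (mkHH D (a ⊗ₜ[k] a')))
        = ∑ j, ∑ l, mkHH D (D.hmul (D.hmul a (D.uB j)) (D.vmul (D.vB j) (D.xR l))
            ⊗ₜ[k] D.vmul (D.yR l) a') := by
          simp only [hΓ, map_sum, gammaInv_mkAB, sum_mkHH_hmul_xR_tmul_vmul]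
      _ = ∑ l, mkHH D (a ⊗ₜ[k] D.vmul (D.hmul D.e (D.xR l)) (D.vmul (D.yR l) a')) := by
          rw [Finset.sum_comm]
          simp only [D.hassoc, ← map_sum, ← TensorProduct.sum_tmul, D.sum_uB_hmul_vB_vmul,
            D.hmul_phiT_phiR, mkHH_vmul_phiR_tmul]
      _ = mkHH D (a ⊗ₜ[k] a') := by
          simp only [← map_sum, ← TensorProduct.tmul_sum, ← D.vassoc, ← LinearMap.map_sum₂,
            D.sum_phiR_xR_vmul_yR, D.e_vmul]
  | add z w hz hw => simp only [map_add, hz, hw]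

theorem IsGammaRB.bijective (hΓ : IsGammaRB D Γ) : Function.Bijective Γ :=
  ⟨Function.LeftInverse.injective hΓ.gammaInv_apply,
    Function.RightInverse.surjective hΓ.apply_gammaInv⟩

end Gamma

/-- The common shape of `RightHMod.Fgp` and `RightHMod.FgpOn`: `X` with the right `H`-action
`act` is a direct summand of some `Hⁿ`. -/
def IsFgpAct {X : Type} [AddCommGroup X] [Module k X] (act : X → A → X) : Prop :=
  ∃ (n : ℕ) (u : X →ₗ[k] (Fin n → A)) (p : (Fin n → A) →ₗ[k] X),
    (∀ x h j, u (act x h) j = D.hmul (u x j) h) ∧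
    (∀ v h, p (fun j => D.hmul (v j) h) = act (p v) h) ∧
    ∀ x, p (u x) = x

section Retract

variable {D} {X X' : Type} [AddCommGroup X] [Module k X] [AddCommGroup X'] [Module k X']

theorem IsFgpAct.of_fintype {ι : Type} [Fintype ι] {act : X → A → X} (u : X →ₗ[k] (ι → A))
    (p : (ι → A) →ₗ[k] X) (hu : ∀ x h j, u (act x h) j = D.hmul (u x j) h)
    (hp : ∀ v h, p (fun j => D.hmul (v j) h) = act (p v) h) (hpu : ∀ x, p (u x) = x) :
    IsFgpAct D act := by
  classical
  let e := Fintype.equivFin ι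
  refine ⟨Fintype.card ι, LinearMap.funLeft k A e.symm ∘ₗ u, p ∘ₗ LinearMap.funLeft k A e,
    fun x h j => hu x h (e.symm j), fun v h => hp (v ∘ e) h, fun x => ?_⟩
  have h_reindex : LinearMap.funLeft k A e (LinearMap.funLeft k A e.symm (u x)) = u x := by
    ext j
    simp only [LinearMap.funLeft_apply, Equiv.symm_apply_apply]
  simpa only [LinearMap.comp_apply, h_reindex] using hpu x

theorem IsFgpAct.of_sum_retract {ι : Type} [Fintype ι] {act : X → A → X}
    {act' : X' →ₗ[k] A →ₗ[k] X'} (hX : IsFgpAct D act) (f : ι → X' →ₗ[k] X) (g : ι → X →ₗ[k] X')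
    (hf : ∀ q x h, f q (act' x h) = act (f q x) h) (hg : ∀ q x h, g q (act x h) = act' (g q x) h)
    (hgf : ∀ x, ∑ q, g q (f q x) = x) : IsFgpAct D (fun x h => act' x h) := by
  obtain ⟨n, u, p, hu, hp, hpu⟩ := hX
  refine IsFgpAct.of_fintype (ι := ι × Fin n)
    (LinearMap.pi fun r => LinearMap.proj r.2 ∘ₗ u ∘ₗ f r.1)
    (∑ q, g q ∘ₗ p ∘ₗ LinearMap.pi fun j => LinearMap.proj (q, j))
    (fun x h r => by
      simp only [LinearMap.pi_apply, LinearMap.comp_apply, LinearMap.proj_apply, hf, hu])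
    (fun v h => ?_) (fun x => ?_)
  · simp only [LinearMap.sum_apply, LinearMap.comp_apply, map_sum]
    refine Finset.sum_congr rfl fun q _ => ?_
    rw [← hg, ← hp]
    rfl
  · simp only [LinearMap.sum_apply, LinearMap.comp_apply]
    exact (Finset.sum_congr rfl fun q _ => congrArg (g q) (hpu (f q x))).trans (hgf x)

end Retract

theorem isFgpAct_actAB : IsFgpAct D (fun ξ h => actAB D h ξ) := by
  refine ⟨D.nB, LinearMap.pi (coordAB D),
    ∑ j, mkAB D ∘ₗ TensorProduct.mk k A A (D.uB j) ∘ₗ LinearMap.proj j, ?_, ?_, ?_⟩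
  · intro ξ h j
    induction ξ using AtB.induction_on with
    | zero => simp only [map_zero, Pi.zero_apply, LinearMap.zero_apply]
    | tmul a b => simp only [LinearMap.pi_apply, actAB_mkAB, coordAB_mkAB, D.hassoc]
    | add ξ ζ hξ hζ => simp only [map_add, LinearMap.add_apply, Pi.add_apply, hξ, hζ]
  · intro v h
    simp only [LinearMap.sum_apply, LinearMap.comp_apply, LinearMap.proj_apply,
      TensorProduct.mk_apply, map_sum, actAB_mkAB]
  · intro ξ
    simpa only [LinearMap.sum_apply, LinearMap.comp_apply, LinearMap.proj_apply,
      TensorProduct.mk_apply, LinearMap.pi_apply] using sum_mkAB_uB_tmul_coordAB D ξ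

section Fgp

variable {D} {act2 : TensorR (regH D) (regH D) →ₗ[k] A →ₗ[k] TensorR (regH D) (regH D)}
  {Γ : TensorR (regH D) (regH D) →ₗ[k] AtB D}

theorem IsGammaRB.isFgpAct (hΓ : IsGammaRB D Γ) (hact2 : IsDiagAct (regH D) (regH D) act2) :
    IsFgpAct D (fun z h => act2 z h) :=
  (isFgpAct_actAB D).of_sum_retract (ι := Unit) (fun _ => Γ) (fun _ => gammaInv D)
    (fun _ => hΓ.apply_act hact2)
    (fun _ ξ h => by
      obtain ⟨z, rfl⟩ := hΓ.bijective.2 ξ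
      rw [← hΓ.apply_act hact2, hΓ.gammaInv_apply, hΓ.gammaInv_apply])
    (fun z => by simp only [Finset.univ_unique, Finset.sum_singleton, hΓ.gammaInv_apply])

theorem IsGammaRB.fgpOn_of_fgp (hΓ : IsGammaRB D Γ) (hact2 : IsDiagAct (regH D) (regH D) act2)
    {Y Y' : RightHMod k A D} {act2' : TensorR Y Y' →ₗ[k] A →ₗ[k] TensorR Y Y'}
    (hd : IsDiagAct Y Y' act2') (hY : Y.Fgp) (hY' : Y'.Fgp) : FgpOn Y Y' act2' := by
  obtain ⟨n, u, p, hu, hp, hpu⟩ := hY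
  obtain ⟨n', u', p', hu', hp', hpu'⟩ := hY'
  have hsingle : ∀ {m : ℕ} (s : Fin m) (a h : A),
      (Pi.single s (D.hmul a h) : Fin m → A) = fun j => D.hmul ((Pi.single s a : Fin m → A) j) h :=
    fun s a h => Pi.single_op (fun _ a => D.hmul a h) (fun _ => LinearMap.map_zero₂ _ _) s a
  let coord (s : Fin n) (t : Fin n') : TensorR Y Y' →ₗ[k] TensorR (regH D) (regH D) :=
    TensorR.map (LinearMap.proj s ∘ₗ u) (LinearMap.proj t ∘ₗ u')
      (fun x h => hu x h s) (fun y h => hu' y h t)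
  let incl (s : Fin n) (t : Fin n') : TensorR (regH D) (regH D) →ₗ[k] TensorR Y Y' :=
    TensorR.map (p ∘ₗ LinearMap.single k (fun _ => A) s)
      (p' ∘ₗ LinearMap.single k (fun _ => A) t)
      (fun (a : A) h => by
        show p (Pi.single s (D.hmul a h)) = Y.act (p (Pi.single s a)) h
        rw [hsingle, hp])
      (fun (a : A) h => by
        show p' (Pi.single t (D.hmul a h)) = Y'.act (p' (Pi.single t a)) h
        rw [hsingle, hp'])
  refine (hΓ.isFgpAct hact2).of_sum_retract (ι := Fin n × Fin n') (fun q => coord q.1 q.2)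
    (fun q => incl q.1 q.2) (fun _ => TensorR.map_act hd hact2) (fun _ => TensorR.map_act hact2 hd)
    fun z => ?_
  induction z using TensorR.induction_on with
  | zero => simp only [map_zero, Finset.sum_const_zero]
  | tmul x y =>
    have h_term : ∀ s t, incl s t (coord s t (mkXY Y Y' (x ⊗ₜ[k] y)))
        = mkXY Y Y' (p (Pi.single s (u x s)) ⊗ₜ[k] p' (Pi.single t (u' y t))) := fun _ _ => rfl
    rw [Fintype.sum_prod_type]
    simp only [h_term]
    simp only [← map_sum, ← TensorProduct.tmul_sum, ← TensorProduct.sum_tmul,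
      Finset.univ_sum_single, hpu, hpu']
  | add z w hz hw => simp only [map_add, Finset.sum_add_distrib, hz, hw]

end Fgp

/-- For a Frobenius Hopf algebroid `H` (the horizontal Hopf
algebroid of a distributive double algebra), the finitely generated projective
right `H`-modules are closed under the monoidal product `⊗_R`; in particular
`H ⊗_R H` is a finitely generated projective right `H`-module, via the right
`H`-module isomorphism `Γ_RB : H ⊗_R H → A ⊗_B H`,
`a ⊗ a' ↦ a_(1) ⊗_B (a_(2) ∘ a')`, where `A_B` is finitely generated
projective. -/
theorem stmt18
    -- data for the particular claim about `H ⊗_R H`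
    (act2 : RightHMod.TensorR (regH D) (regH D) →ₗ[k] A →ₗ[k] RightHMod.TensorR (regH D) (regH D))
    (hact2 : RightHMod.IsDiagAct (regH D) (regH D) act2)
    (Γ : RightHMod.TensorR (regH D) (regH D) →ₗ[k] AtB D)
    (hΓ : ∀ a a', Γ (RightHMod.mkXY (regH D) (regH D) (a ⊗ₜ[k] a'))
      = ∑ j, mkAB D (D.hmul a (D.uB j) ⊗ₜ[k] D.vmul (D.vB j) a')) :
    -- closure of fgp modules under the monoidal product
    (∀ (Y Y' : RightHMod k A D)
      (act2' : RightHMod.TensorR Y Y' →ₗ[k] A →ₗ[k] RightHMod.TensorR Y Y'),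
      RightHMod.IsDiagAct Y Y' act2' → Y.Fgp → Y'.Fgp → RightHMod.FgpOn Y Y' act2') ∧
    -- `Γ_RB` is a bijective right `H`-module map …
    Function.Bijective Γ ∧
    (∀ a a' h, Γ (act2 (RightHMod.mkXY (regH D) (regH D) (a ⊗ₜ[k] a')) h)
      = ∑ j, mkAB D (D.hmul a (D.uB j) ⊗ₜ[k] D.hmul (D.vmul (D.vB j) a') h)) ∧
    -- … hence `H ⊗_R H` is finitely generated projective
    RightHMod.FgpOn (regH D) (regH D) act2 := by
  have hΓRB : IsGammaRB D Γ := hΓ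
  exact ⟨fun _ _ _ hd hY hY' => hΓRB.fgpOn_of_fgp hact2 hd hY hY', hΓRB.bijective,
    hΓRB.apply_act_mkHH hact2, hΓRB.isFgpAct hact2⟩

end Stmt18
end
end
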